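/- Let A = Σ{A_{ij} | i,j ∈ I} be the generalized matrix ring of a Γ_I-system. If the ring A is semiprime, then for all s,t ∈ I the A_{ts}-ring A_{st} is semiprime: for every ideal B_{st} of the A_{ts}-ring A_{st}, B_{st}·A_{ts}·B_{st} = 0 implies B_{st} = 0. -/

import Mathlib

/-!
Generalized matrix rings (g.m.rings) of a `Γ_I`-system, their g.m.ideals,
g.m.homomorphisms, quotients, and the general theory of radicals,
following Zhang, "The Baer radical of generalized matrix rings".
-/

universe u v w

set_option autoImplicit false
set_option maxHeartbeats 1000000

/-- A `Γ_I`-system: a family of additive abelian groups `A i j` (`i j : I`)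
with multiplications `A i j × A j k → A i k`, additive in each variable and
associative. -/
structure GammaSystem (I : Type u) where
  A : I → I → Type v
  [inst : ∀ i j, AddCommGroup (A i j)]
  mul : ∀ {i j k : I}, A i j → A j k → A i k
  add_mul : ∀ {i j k : I} (x y : A i j) (z : A j k), mul (x + y) z = mul x z + mul y z
  mul_add : ∀ {i j k : I} (w : A i j) (x y : A j k), mul w (x + y) = mul w x + mul w y
  mul_assoc : ∀ {l i j k : I} (w : A l i) (x : A i j) (z : A j k),
    mul w (mul x z) = mul (mul w x) z

attribute [instance] GammaSystem.inst

variable {I : Type u}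

/-- The generalized matrix ring `A = Σ{A_{ij} | i,j ∈ I}` of a `Γ_I`-system:
the external direct sum `⨁_{(i,j)} A i j` (finitely supported families). -/
abbrev GMRing (S : GammaSystem I) : Type (max u v) := Π₀ p : I × I, S.A p.1 p.2

namespace GammaSystem

variable (S : GammaSystem I)

lemma zero_mul' {i j k : I} (z : S.A j k) : S.mul (0 : S.A i j) z = 0 := by
  have h := S.add_mul (0 : S.A i j) 0 z
  rw [add_zero] at h
  exact (add_eq_left.mp h.symm)

lemma mul_zero' {i j k : I} (w : S.A i j) : S.mul w (0 : S.A j k) = 0 := by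
  have h := S.mul_add w (0 : S.A j k) 0
  rw [add_zero] at h
  exact (add_eq_left.mp h.symm)

lemma neg_mul' {i j k : I} (x : S.A i j) (z : S.A j k) :
    S.mul (-x) z = -(S.mul x z) := by
  have h := S.add_mul x (-x) z
  rw [add_neg_cancel, S.zero_mul'] at h
  exact (neg_eq_of_add_eq_zero_right h.symm).symm

lemma mul_neg' {i j k : I} (w : S.A i j) (x : S.A j k) :
    S.mul w (-x) = -(S.mul w x) := by
  have h := S.mul_add w x (-x)
  rw [add_neg_cancel, S.mul_zero'] at h
  exact (neg_eq_of_add_eq_zero_right h.symm).symm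

-- Multiplication of generalized matrices: `(x*y)_{ij} = ∑_k x_{ik} y_{kj}`.
open Classical in
noncomputable def gmul (x y : GMRing S) : GMRing S :=
  x.sum fun p a => y.sum fun q b =>
    if h : p.2 = q.1 then
      DFinsupp.single (p.1, q.2)
        (S.mul a (cast (congrArg (fun t => S.A t q.2) h.symm) b))
    else 0

open Classical in
lemma gmul_inner_zero (p : I × I) (a : S.A p.1 p.2) (q : I × I) :
    (if h : p.2 = q.1 then
      DFinsupp.single (p.1, q.2)
        (S.mul a (cast (congrArg (fun t => S.A t q.2) h.symm) (0 : S.A q.1 q.2)))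
    else (0 : GMRing S)) = (0 : GMRing S) := by
  obtain ⟨p1, p2⟩ := p
  obtain ⟨q1, q2⟩ := q
  by_cases h : p2 = q1
  · subst h
    simp [S.mul_zero']
  · simp [h]

open Classical in
lemma gmul_inner_add (p : I × I) (a : S.A p.1 p.2) (q : I × I) (b₁ b₂ : S.A q.1 q.2) :
    (if h : p.2 = q.1 then
      DFinsupp.single (p.1, q.2)
        (S.mul a (cast (congrArg (fun t => S.A t q.2) h.symm) (b₁ + b₂)))
    else (0 : GMRing S)) =
    (if h : p.2 = q.1 then
      DFinsupp.single (p.1, q.2)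
        (S.mul a (cast (congrArg (fun t => S.A t q.2) h.symm) b₁))
    else (0 : GMRing S)) +
    (if h : p.2 = q.1 then
      DFinsupp.single (p.1, q.2)
        (S.mul a (cast (congrArg (fun t => S.A t q.2) h.symm) b₂))
    else (0 : GMRing S)) := by
  obtain ⟨p1, p2⟩ := p
  obtain ⟨q1, q2⟩ := q
  by_cases h : p2 = q1
  · subst h
    simp [S.mul_add, DFinsupp.single_add]
  · simp [h]

open Classical in
lemma gmul_add (x y z : GMRing S) : S.gmul x (y + z) = S.gmul x y + S.gmul x z := by
  unfold gmul
  have : ∀ (p : I × I) (a : S.A p.1 p.2),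
      (y + z).sum (fun q b =>
        if h : p.2 = q.1 then
          DFinsupp.single (p.1, q.2)
            (S.mul a (cast (congrArg (fun t => S.A t q.2) h.symm) b))
        else (0 : GMRing S)) =
      y.sum (fun q b =>
        if h : p.2 = q.1 then
          DFinsupp.single (p.1, q.2)
            (S.mul a (cast (congrArg (fun t => S.A t q.2) h.symm) b))
        else (0 : GMRing S)) +
      z.sum (fun q b =>
        if h : p.2 = q.1 then
          DFinsupp.single (p.1, q.2)
            (S.mul a (cast (congrArg (fun t => S.A t q.2) h.symm) b))
        else (0 : GMRing S)) := by
    intro p a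
    exact DFinsupp.sum_add_index (fun q => S.gmul_inner_zero p a q)
      (fun q b₁ b₂ => S.gmul_inner_add p a q b₁ b₂)
  calc x.sum (fun p a => (y + z).sum fun q b =>
        if h : p.2 = q.1 then
          DFinsupp.single (p.1, q.2)
            (S.mul a (cast (congrArg (fun t => S.A t q.2) h.symm) b))
        else (0 : GMRing S))
      = x.sum (fun p a =>
          (y.sum fun q b =>
            if h : p.2 = q.1 then
              DFinsupp.single (p.1, q.2)
                (S.mul a (cast (congrArg (fun t => S.A t q.2) h.symm) b))
            else (0 : GMRing S)) +
          (z.sum fun q b =>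
            if h : p.2 = q.1 then
              DFinsupp.single (p.1, q.2)
                (S.mul a (cast (congrArg (fun t => S.A t q.2) h.symm) b))
            else (0 : GMRing S))) := by
        exact congrArg (DFinsupp.sum x) (funext fun p => funext fun a => this p a)
    _ = _ := DFinsupp.sum_add

open Classical in
lemma add_gmul (x y z : GMRing S) : S.gmul (x + y) z = S.gmul x z + S.gmul y z := by
  unfold gmul
  refine DFinsupp.sum_add_index (fun p => ?_) (fun p a₁ a₂ => ?_)
  · have : (fun (q : I × I) (b : S.A q.1 q.2) =>
        (if h : p.2 = q.1 then
          DFinsupp.single (p.1, q.2)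
            (S.mul (0 : S.A p.1 p.2) (cast (congrArg (fun t => S.A t q.2) h.symm) b))
        else (0 : GMRing S))) = fun q b => (0 : GMRing S) := by
      funext q b
      obtain ⟨p1, p2⟩ := p
      obtain ⟨q1, q2⟩ := q
      by_cases h : p2 = q1
      · subst h; simp [S.zero_mul']
      · simp [h]
    rw [congrArg (DFinsupp.sum z) this, DFinsupp.sum_zero]
  · have : (fun (q : I × I) (b : S.A q.1 q.2) =>
        (if h : p.2 = q.1 then
          DFinsupp.single (p.1, q.2)
            (S.mul (a₁ + a₂) (cast (congrArg (fun t => S.A t q.2) h.symm) b))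
        else (0 : GMRing S))) = fun q b =>
        (if h : p.2 = q.1 then
          DFinsupp.single (p.1, q.2)
            (S.mul a₁ (cast (congrArg (fun t => S.A t q.2) h.symm) b))
        else (0 : GMRing S)) +
        (if h : p.2 = q.1 then
          DFinsupp.single (p.1, q.2)
            (S.mul a₂ (cast (congrArg (fun t => S.A t q.2) h.symm) b))
        else (0 : GMRing S)) := by
      funext q b
      obtain ⟨p1, p2⟩ := p
      obtain ⟨q1, q2⟩ := q
      by_cases h : p2 = q1
      · subst h; simp [S.add_mul, DFinsupp.single_add]
      · simp [h]
    rw [congrArg (DFinsupp.sum z) this, DFinsupp.sum_add]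

open Classical in
lemma zero_gmul (y : GMRing S) : S.gmul 0 y = 0 := by
  unfold gmul
  exact DFinsupp.sum_zero_index

open Classical in
lemma gmul_zero (x : GMRing S) : S.gmul x 0 = 0 := by
  unfold gmul
  have : (fun (p : I × I) (a : S.A p.1 p.2) =>
      DFinsupp.sum (0 : GMRing S) (fun q b =>
        if h : p.2 = q.1 then
          DFinsupp.single (p.1, q.2)
            (S.mul a (cast (congrArg (fun t => S.A t q.2) h.symm) b))
        else (0 : GMRing S))) = fun p a => (0 : GMRing S) := by
    funext p a
    exact DFinsupp.sum_zero_index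
  rw [congrArg (DFinsupp.sum x) this, DFinsupp.sum_zero]

open Classical in
lemma gmul_single (p : I × I) (a : S.A p.1 p.2) (y : GMRing S) :
    S.gmul (DFinsupp.single p a) y =
      y.sum fun q b =>
        if h : p.2 = q.1 then
          DFinsupp.single (p.1, q.2)
            (S.mul a (cast (congrArg (fun t => S.A t q.2) h.symm) b))
        else 0 := by
  unfold gmul
  refine DFinsupp.sum_single_index ?_
  have : (fun (q : I × I) (b : S.A q.1 q.2) =>
      (if h : p.2 = q.1 then
        DFinsupp.single (p.1, q.2)
          (S.mul (0 : S.A p.1 p.2) (cast (congrArg (fun t => S.A t q.2) h.symm) b))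
      else (0 : GMRing S))) = fun q b => (0 : GMRing S) := by
    funext q b
    obtain ⟨p1, p2⟩ := p; obtain ⟨q1, q2⟩ := q
    by_cases h : p2 = q1
    · subst h; simp [S.zero_mul']
    · simp [h]
  rw [congrArg (DFinsupp.sum y) this, DFinsupp.sum_zero]

open Classical in
lemma gmul_single_single (p q : I × I) (a : S.A p.1 p.2) (b : S.A q.1 q.2) :
    S.gmul (DFinsupp.single p a) (DFinsupp.single q b) =
      if h : p.2 = q.1 then
        DFinsupp.single (p.1, q.2)
          (S.mul a (cast (congrArg (fun t => S.A t q.2) h.symm) b))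
      else 0 := by
  rw [S.gmul_single]
  exact DFinsupp.sum_single_index (S.gmul_inner_zero p a q)

open Classical in
lemma gmul_single_assoc (p q r : I × I) (a : S.A p.1 p.2) (b : S.A q.1 q.2)
    (c : S.A r.1 r.2) :
    S.gmul (S.gmul (DFinsupp.single p a) (DFinsupp.single q b)) (DFinsupp.single r c) =
    S.gmul (DFinsupp.single p a) (S.gmul (DFinsupp.single q b) (DFinsupp.single r c)) := by
  obtain ⟨p1, p2⟩ := p; obtain ⟨q1, q2⟩ := q; obtain ⟨r1, r2⟩ := r
  by_cases h1 : p2 = q1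
  · subst h1
    by_cases h2 : q2 = r1
    · subst h2
      rw [S.gmul_single_single (p1, p2) (p2, q2) a b, dif_pos rfl,
        S.gmul_single_single (p2, q2) (q2, r2) b c, dif_pos rfl,
        S.gmul_single_single (p1, q2) (q2, r2) _ c, dif_pos rfl,
        S.gmul_single_single (p1, p2) (p2, r2) a _, dif_pos rfl]
      show DFinsupp.single (p1, r2) _ = DFinsupp.single (p1, r2) _
      rw [show (cast (congrArg (fun t => S.A t q2) (Eq.symm rfl)) b) = b from rfl,
        show (cast (congrArg (fun t => S.A t r2) (Eq.symm rfl)) c) = c from rfl]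
      exact congrArg _ (S.mul_assoc a b c).symm
    · rw [S.gmul_single_single (p1, p2) (p2, q2) a b, dif_pos rfl,
        S.gmul_single_single (p2, q2) (r1, r2) b c, dif_neg h2,
        S.gmul_single_single (p1, q2) (r1, r2) _ c, dif_neg h2, S.gmul_zero]
  · by_cases h2 : q2 = r1
    · subst h2
      rw [S.gmul_single_single (p1, p2) (q1, q2) a b, dif_neg h1,
        S.gmul_single_single (q1, q2) (q2, r2) b c, dif_pos rfl,
        S.gmul_single_single (p1, p2) (q1, r2) a _, dif_neg h1, S.zero_gmul]
    · rw [S.gmul_single_single (p1, p2) (q1, q2) a b, dif_neg h1,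
        S.gmul_single_single (q1, q2) (r1, r2) b c, dif_neg h2,
        S.zero_gmul, S.gmul_zero]

open Classical in
lemma gmul_single_single_assoc' (p q : I × I) (a : S.A p.1 p.2) (b : S.A q.1 q.2)
    (z : GMRing S) :
    S.gmul (S.gmul (DFinsupp.single p a) (DFinsupp.single q b)) z =
    S.gmul (DFinsupp.single p a) (S.gmul (DFinsupp.single q b) z) := by
  induction z using DFinsupp.induction with
  | h0 => simp only [S.gmul_zero, S.zero_gmul]
  | ha r c f hf hc ih =>
      rw [S.gmul_add, S.gmul_add, S.gmul_add, ih, S.gmul_single_assoc]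

open Classical in
lemma gmul_single_assoc'' (p : I × I) (a : S.A p.1 p.2) (y z : GMRing S) :
    S.gmul (S.gmul (DFinsupp.single p a) y) z =
    S.gmul (DFinsupp.single p a) (S.gmul y z) := by
  induction y using DFinsupp.induction with
  | h0 => simp only [S.gmul_zero, S.zero_gmul]
  | ha q b f hf hb ih =>
      rw [S.gmul_add, S.add_gmul, S.add_gmul, S.gmul_add, ih,
        S.gmul_single_single_assoc']

open Classical in
lemma gmul_assoc (x y z : GMRing S) :
    S.gmul (S.gmul x y) z = S.gmul x (S.gmul y z) := by
  induction x using DFinsupp.induction with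
  | h0 => simp only [S.gmul_zero, S.zero_gmul]
  | ha p a f hf ha ih =>
      rw [S.add_gmul, S.add_gmul, S.add_gmul, ih, S.gmul_single_assoc'']

noncomputable instance : NonUnitalNonAssocRing (GMRing S) :=
  { (inferInstance : AddCommGroup (GMRing S)) with
    mul := S.gmul
    left_distrib := S.gmul_add
    right_distrib := fun x y z => S.add_gmul x y z
    zero_mul := S.zero_gmul
    mul_zero := S.gmul_zero }

/-- The generalized matrix ring is a (possibly non-unital) associative ring. -/
noncomputable instance : NonUnitalRing (GMRing S) :=
  { (inferInstance : NonUnitalNonAssocRing (GMRing S)) with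
    mul_assoc := S.gmul_assoc }

/-- A `Γ_I`-system (g.m.ring) is zero if all its components are zero. -/
def IsZero : Prop := ∀ (i j : I) (x : S.A i j), x = 0

/-- `x ∈ A_{ij}` is `m`-nilpotent in the `A_{ji}`-ring `A_{ij}`: every
`m`-sequence `a_{n+1} = a_n u_n a_n` (`u_n ∈ A_{ji}`) with `a_1 = x`
satisfies `a_k = 0` for some `k`. -/
def MNilpotent (i j : I) (x : S.A i j) : Prop :=
  ∀ a : ℕ → S.A i j, a 0 = x →
    (∀ n, ∃ u : S.A j i, a (n + 1) = S.mul (S.mul (a n) u) (a n)) →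
    ∃ k, a k = 0

/-- The Baer radical `r_b(A_{ij})` of the `A_{ji}`-ring `A_{ij}`: the set of
its `m`-nilpotent elements. -/
def componentBaer (i j : I) : Set (S.A i j) := { x | S.MNilpotent i j x }

end GammaSystem

section RingNotions

variable (R : Type w) [NonUnitalRing R]

/-- A two-sided ideal `P` of a (possibly non-unital) ring is prime if
`BC ⊆ P` implies `B ⊆ P` or `C ⊆ P`. -/
def TwoSidedIdeal.IsPrimeIdeal {R : Type w} [NonUnitalRing R]
    (P : TwoSidedIdeal R) : Prop :=
  ∀ B C : TwoSidedIdeal R, (∀ b ∈ B, ∀ c ∈ C, b * c ∈ P) → B ≤ P ∨ C ≤ P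

/-- The Baer radical of a (possibly non-unital) ring: the intersection of all
prime two-sided ideals. -/
def baerRadical : Set R := { x | ∀ P : TwoSidedIdeal R, P.IsPrimeIdeal → x ∈ P }

/-- `x` is an `m`-nilpotent element of the ring `R`: every `m`-sequence
`a_{n+1} = a_n u_n a_n` (`u_n ∈ R`) with `a_1 = x` reaches `0`. -/
def IsMNilpotent {R : Type w} [NonUnitalRing R] (x : R) : Prop :=
  ∀ a : ℕ → R, a 0 = x → (∀ n, ∃ u : R, a (n + 1) = a n * u * a n) → ∃ k, a k = 0

/-- `x` is `m`-nilpotent in the subring given by the subset `T` of `R`: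
every `m`-sequence lying in `T`, with multipliers `u_n ∈ T`, starting at `x`,
reaches `0`. -/
def IsMNilpotentIn {R : Type w} [NonUnitalRing R] (T : Set R) (x : R) : Prop :=
  ∀ a : ℕ → R, (∀ n, a n ∈ T) → a 0 = x →
    (∀ n, ∃ u ∈ T, a (n + 1) = a n * u * a n) → ∃ k, a k = 0

/-- A ring is prime if `BC = 0` implies `B = 0` or `C = 0` for all two-sided
ideals `B, C`. -/
def IsPrimeRing : Prop :=
  ∀ B C : TwoSidedIdeal R, (∀ b ∈ B, ∀ c ∈ C, b * c = 0) → B = ⊥ ∨ C = ⊥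

/-- A ring is semiprime if `B·B = 0` implies `B = 0` for every two-sided
ideal `B`. -/
def IsSemiprimeRing : Prop :=
  ∀ B : TwoSidedIdeal R, (∀ x ∈ B, ∀ y ∈ B, x * y = 0) → B = ⊥

/-- The annihilator `B* = {x ∈ R | xB = Bx = 0}` of a two-sided ideal. -/
def TwoSidedIdeal.annihilator {R : Type w} [NonUnitalRing R]
    (B : TwoSidedIdeal R) : TwoSidedIdeal R :=
  TwoSidedIdeal.mk' { x | ∀ b ∈ B, x * b = 0 ∧ b * x = 0 }
    (fun b hb => ⟨zero_mul b, mul_zero b⟩)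
    (fun {x y} hx hy b hb =>
      ⟨by rw [add_mul, (hx b hb).1, (hy b hb).1, add_zero],
       by rw [mul_add, (hx b hb).2, (hy b hb).2, add_zero]⟩)
    (fun {x} hx b hb =>
      ⟨by rw [neg_mul, (hx b hb).1, neg_zero],
       by rw [mul_neg, (hx b hb).2, neg_zero]⟩)
    (fun {x y} hy b hb => by
      refine ⟨?_, ?_⟩
      · rw [mul_assoc, (hy b hb).1, mul_zero]
      · rw [← mul_assoc]
        exact (hy (b * x) (B.mul_mem_right b x hb)).2)
    (fun {x y} hx b hb => by
      refine ⟨?_, ?_⟩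
      · rw [mul_assoc]
        exact (hx (y * b) (B.mul_mem_left y b hb)).1
      · rw [← mul_assoc, (hx b hb).2, zero_mul])

end RingNotions

/-- A g.m.ideal of the g.m.ring of `S`: a family of additive subgroups
`B i j ≤ A i j` with `B_{ij} A_{jk} ⊆ B_{ik}` and `A_{ij} B_{jk} ⊆ B_{ik}`. -/
structure GMIdeal (S : GammaSystem I) where
  B : ∀ i j : I, AddSubgroup (S.A i j)
  mul_mem_right : ∀ {i j k : I} (x : S.A i j) (z : S.A j k), x ∈ B i j → S.mul x z ∈ B i k
  mul_mem_left : ∀ {i j k : I} (x : S.A i j) (z : S.A j k), z ∈ B j k → S.mul x z ∈ B i k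

namespace GMIdeal

variable {S : GammaSystem I} (N : GMIdeal S)

/-- The subset of the g.m.ring consisting of the generalized matrices all of
whose components lie in the g.m.ideal `N`. -/
def carrier : Set (GMRing S) := { x | ∀ p : I × I, x p ∈ N.B p.1 p.2 }

/-- A g.m.ideal is zero if all its components are the zero subgroup. -/
def IsZero : Prop := ∀ i j : I, N.B i j = ⊥

/-- A g.m.ideal regarded as a g.m.ring (a `Γ_I`-system) in its own right. -/
def toSystem : GammaSystem I where
  A i j := N.B i j
  inst i j := inferInstance
  mul {i j k} x z := ⟨S.mul x.1 z.1, N.mul_mem_right x.1 z.1 x.2⟩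
  add_mul x y z := Subtype.ext (S.add_mul x.1 y.1 z.1)
  mul_add w x y := Subtype.ext (S.mul_add w.1 x.1 y.1)
  mul_assoc w x z := Subtype.ext (S.mul_assoc w.1 x.1 z.1)

/-- The quotient g.m.ring `A//B`, with components `A_{ij}/B_{ij}`. -/
def quotSystem : GammaSystem I where
  A i j := S.A i j ⧸ N.B i j
  inst i j := inferInstance
  mul {i j k} x z :=
    Quotient.liftOn₂' x z
      (fun a b => ((S.mul a b : S.A i k) : S.A i k ⧸ N.B i k))
      (by
        intro a₁ a₂ b₁ b₂ h₁ h₂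
        replace h₁ := (QuotientAddGroup.leftRel_apply).mp h₁
        replace h₂ := (QuotientAddGroup.leftRel_apply).mp h₂
        refine (QuotientAddGroup.eq).mpr ?_
        have : -(S.mul a₁ a₂) + S.mul b₁ b₂ =
            S.mul (-a₁ + b₁) a₂ + S.mul b₁ (-a₂ + b₂) := by
          rw [S.add_mul, S.mul_add, S.neg_mul', S.mul_neg']
          abel
        rw [this]
        exact add_mem (N.mul_mem_right _ _ h₁) (N.mul_mem_left _ _ h₂))
  add_mul {i j k} x y z := by
    refine Quotient.inductionOn₃' x y z ?_
    intro a b c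
    show ((S.mul (a + b) c : S.A i k) : S.A i k ⧸ N.B i k) = _
    rw [S.add_mul]
    rfl
  mul_add {i j k} w x y := by
    refine Quotient.inductionOn₃' w x y ?_
    intro a b c
    show ((S.mul a (b + c) : S.A i k) : S.A i k ⧸ N.B i k) = _
    rw [S.mul_add]
    rfl
  mul_assoc {l i j k} w x z := by
    refine Quotient.inductionOn₃' w x z ?_
    intro a b c
    show ((S.mul a (S.mul b c) : S.A l k) : S.A l k ⧸ N.B l k) = _
    rw [S.mul_assoc]
    rfl

/-- The annihilator g.m.ideal `B* = {x ∈ A | xB = Bx = 0}` of a g.m.ideal. -/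
def ann : GMIdeal S where
  B i j :=
    { carrier := { x | (∀ (k : I) (b : S.A j k), b ∈ N.B j k → S.mul x b = 0) ∧
        (∀ (k : I) (b : S.A k i), b ∈ N.B k i → S.mul b x = 0) }
      add_mem' := by
        rintro x y ⟨hx₁, hx₂⟩ ⟨hy₁, hy₂⟩
        refine ⟨fun k b hb => ?_, fun k b hb => ?_⟩
        · rw [S.add_mul, hx₁ k b hb, hy₁ k b hb, add_zero]
        · rw [S.mul_add, hx₂ k b hb, hy₂ k b hb, add_zero]
      zero_mem' := ⟨fun k b _ => S.zero_mul' b, fun k b _ => S.mul_zero' b⟩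
      neg_mem' := by
        rintro x ⟨hx₁, hx₂⟩
        refine ⟨fun k b hb => ?_, fun k b hb => ?_⟩
        · rw [S.neg_mul', hx₁ k b hb, neg_zero]
        · rw [S.mul_neg', hx₂ k b hb, neg_zero] }
  mul_mem_right := by
    rintro i j k x z ⟨hx₁, hx₂⟩
    refine ⟨fun m b hb => ?_, fun m b hb => ?_⟩
    · rw [← S.mul_assoc]
      exact hx₁ m (S.mul z b) (N.mul_mem_left z b hb)
    · rw [S.mul_assoc, hx₂ m b hb, S.zero_mul']
  mul_mem_left := by
    rintro i j k x z ⟨hz₁, hz₂⟩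
    refine ⟨fun m b hb => ?_, fun m b hb => ?_⟩
    · rw [← S.mul_assoc, hz₁ m b hb, S.mul_zero']
    · rw [S.mul_assoc]
      exact hz₂ m (S.mul b x) (N.mul_mem_right b x hb)

/-- `N` is a "Baer radical" g.m.ideal: every element of the ring `N` is
`m`-nilpotent in the ring `N`. -/
def IsBaerGMIdeal : Prop := ∀ x ∈ N.carrier, IsMNilpotentIn N.carrier x

end GMIdeal

/-- A g.m.homomorphism between two g.m.rings over the same index set. -/
structure GMHom (S T : GammaSystem I) where
  f : ∀ i j : I, S.A i j → T.A i j
  map_add : ∀ {i j : I} (x y : S.A i j), f i j (x + y) = f i j x + f i j y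
  map_mul : ∀ {i j k : I} (x : S.A i j) (z : S.A j k),
    f i k (S.mul x z) = T.mul (f i j x) (f j k z)

/-- A g.m.homomorphism is surjective if each component map is onto. -/
def GMHom.Surjective {S T : GammaSystem I} (ψ : GMHom S T) : Prop :=
  ∀ i j : I, Function.Surjective (ψ.f i j)

/-- The componentwise intersection `\bar r_b(A)` of all g.m.ideals `B` of `A`
such that the quotient ring `A//B` is a prime ring. -/
def gmBarBaer (S : GammaSystem I) : Set (GMRing S) :=
  { x | ∀ B : GMIdeal S, IsPrimeRing (GMRing B.quotSystem) →
      ∀ p : I × I, x p ∈ B.B p.1 p.2 }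

section RadicalTheory

/-- `N` is the largest g.m.ideal of `S` belonging (as a g.m.ring) to the
class `r`. -/
def IsLargestRadicalIdeal (r : ∀ I₀ : Type u, GammaSystem.{u, v} I₀ → Prop)
    {I : Type u} (S : GammaSystem I) (N : GMIdeal S) : Prop :=
  r I N.toSystem ∧ ∀ M : GMIdeal S, r I M.toSystem → ∀ i j : I, M.B i j ≤ N.B i j

/-- `r` is a radical property of g.m.rings: (R1) closure under surjective
g.m.homomorphic images; (R2) every g.m.ring has a largest `r`-g.m.ideal `r(A)`;
(R3) `A//r(A)` has no non-zero `r`-g.m.ideal. -/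
def IsGMRadicalProperty (r : ∀ I₀ : Type u, GammaSystem.{u, v} I₀ → Prop) : Prop :=
  (∀ (I₀ : Type u) (S T : GammaSystem I₀) (ψ : GMHom S T),
      ψ.Surjective → r I₀ S → r I₀ T) ∧
  (∀ (I₀ : Type u) (S : GammaSystem I₀), ∃ N : GMIdeal S,
      IsLargestRadicalIdeal r S N ∧
      ∀ P : GMIdeal N.quotSystem, r I₀ P.toSystem → P.IsZero)

/-- `S` is `r`-semisimple: `r(S) = 0`, i.e. every `r`-g.m.ideal of `S` is zero. -/
def GMSemisimple (r : ∀ I₀ : Type u, GammaSystem.{u, v} I₀ → Prop)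
    {I : Type u} (S : GammaSystem I) : Prop :=
  ∀ N : GMIdeal S, r I N.toSystem → N.IsZero

/-- `S` can be g.m.homomorphically mapped onto a non-zero member of the
class `K`. -/
def MapsOntoNonzeroMember (K : ∀ I₀ : Type u, GammaSystem.{u, v} I₀ → Prop)
    {I : Type u} (S : GammaSystem I) : Prop :=
  ∃ (T : GammaSystem.{u, v} I) (ψ : GMHom S T),
    ψ.Surjective ∧ ¬ T.IsZero ∧ K I T

/-- Condition (Q1): every non-zero g.m.ideal of any member of `K` can be
g.m.homomorphically mapped onto a non-zero member of `K`. -/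
def Q1Cond (K : ∀ I₀ : Type u, GammaSystem.{u, v} I₀ → Prop) : Prop :=
  ∀ (I₀ : Type u) (S : GammaSystem I₀), K I₀ S →
    ∀ N : GMIdeal S, ¬ N.IsZero → MapsOntoNonzeroMember K N.toSystem

/-- Condition (Q2): if every non-zero g.m.ideal of `A` can be
g.m.homomorphically mapped onto a non-zero member of `K`, then `A ∈ K`. -/
def Q2Cond (K : ∀ I₀ : Type u, GammaSystem.{u, v} I₀ → Prop) : Prop :=
  ∀ (I₀ : Type u) (S : GammaSystem I₀),
    (∀ N : GMIdeal S, ¬ N.IsZero → MapsOntoNonzeroMember K N.toSystem) → K I₀ S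

/-- The radical class of the upper radical `r^K` determined by `K`: the
g.m.rings which cannot be g.m.homomorphically mapped onto a non-zero member
of `K`. -/
def UpperRadicalClass (K : ∀ I₀ : Type u, GammaSystem.{u, v} I₀ → Prop)
    (I : Type u) (S : GammaSystem I) : Prop :=
  ¬ MapsOntoNonzeroMember K S

/-- A g.m.weakly special class: (WS1) every member is a semiprime ring;
(WS2) g.m.ideals of members are members; (WS3) if a g.m.ideal `B` of `A`
is in the class, then `A//B*` is in the class. -/
def IsGMWeaklySpecial (K : ∀ I₀ : Type u, GammaSystem.{u, v} I₀ → Prop) : Prop :=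
  (∀ (I₀ : Type u) (S : GammaSystem I₀), K I₀ S → IsSemiprimeRing (GMRing S)) ∧
  (∀ (I₀ : Type u) (S : GammaSystem I₀) (B : GMIdeal S), K I₀ S → K I₀ B.toSystem) ∧
  (∀ (I₀ : Type u) (S : GammaSystem I₀) (B : GMIdeal S),
      K I₀ B.toSystem → K I₀ B.ann.quotSystem)

/-- A g.m.special class: (S1) every member is a prime ring;
(S2) g.m.ideals of members are members; (S3) if a g.m.ideal `B` of `A`
is in the class, then `A//B*` is in the class. -/
def IsGMSpecial (K : ∀ I₀ : Type u, GammaSystem.{u, v} I₀ → Prop) : Prop :=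
  (∀ (I₀ : Type u) (S : GammaSystem I₀), K I₀ S → IsPrimeRing (GMRing S)) ∧
  (∀ (I₀ : Type u) (S : GammaSystem I₀) (B : GMIdeal S), K I₀ S → K I₀ B.toSystem) ∧
  (∀ (I₀ : Type u) (S : GammaSystem I₀) (B : GMIdeal S),
      K I₀ B.toSystem → K I₀ B.ann.quotSystem)

end RadicalTheory

section RingClasses

/-- A weakly special class of (possibly non-unital) rings: members are
semiprime, two-sided ideals of members are members (as rings), and if a
two-sided ideal `B` of `A` is a member then `A/B*` is a member. -/
def IsWeaklySpecialRingClass (K : ∀ (R : Type w) [NonUnitalRing R], Prop) : Prop :=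
  (∀ (R : Type w) [NonUnitalRing R], K R → IsSemiprimeRing R) ∧
  (∀ (R : Type w) [NonUnitalRing R] (B : TwoSidedIdeal R), K R → K B) ∧
  (∀ (R : Type w) [NonUnitalRing R] (B : TwoSidedIdeal R),
      K B → K B.annihilator.ringCon.Quotient)

/-- A special class of rings: a weakly special class all of whose members are
prime rings. -/
def IsSpecialRingClass (K : ∀ (R : Type w) [NonUnitalRing R], Prop) : Prop :=
  (∀ (R : Type w) [NonUnitalRing R], K R → IsPrimeRing R) ∧
  (∀ (R : Type w) [NonUnitalRing R] (B : TwoSidedIdeal R), K R → K B) ∧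
  (∀ (R : Type w) [NonUnitalRing R] (B : TwoSidedIdeal R),
      K B → K B.annihilator.ringCon.Quotient)

/-- The (upper) radical of the ring `R` determined by a class `K` of rings:
the intersection of all two-sided ideals `B` with `R/B ∈ K`. -/
def ringRadical (K : ∀ (R : Type w) [NonUnitalRing R], Prop)
    (R : Type w) [NonUnitalRing R] : Set R :=
  { x | ∀ B : TwoSidedIdeal R, K B.ringCon.Quotient → x ∈ B }

/-- A radical property of rings: closure under surjective homomorphic images,
existence of a largest `r`-ideal, and `r`-semisimplicity of the quotient by it. -/
def IsRingRadicalProperty (K : ∀ (R : Type w) [NonUnitalRing R], Prop) : Prop :=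
  (∀ (R S : Type w) [NonUnitalRing R] [NonUnitalRing S] (f : R →ₙ+* S),
      Function.Surjective f → K R → K S) ∧
  (∀ (R : Type w) [NonUnitalRing R], ∃ B : TwoSidedIdeal R,
      K B ∧ (∀ C : TwoSidedIdeal R, K C → C ≤ B) ∧
      ∀ D : TwoSidedIdeal B.ringCon.Quotient, K D → D = ⊥)

end RingClasses

/-- An ideal of the `A_{ts}`-ring `A_{st}` (a `Γ`-ring with `M = A_{st}`,
`Γ = A_{ts}`): an additive subgroup `B` with `B·A_{ts}·A_{st} ⊆ B` and
`A_{st}·A_{ts}·B ⊆ B`. -/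
structure GammaIdeal (S : GammaSystem I) (s t : I) where
  carrier : AddSubgroup (S.A s t)
  mul_mem_right : ∀ b ∈ carrier, ∀ (u : S.A t s) (y : S.A s t),
    S.mul (S.mul b u) y ∈ carrier
  mul_mem_left : ∀ (x : S.A s t) (u : S.A t s), ∀ b ∈ carrier,
    S.mul (S.mul x u) b ∈ carrier

/-! Placed at position `(s, t)` of the g.m.ring, an element `b` of `B_{st}` becomes a matrix `x`
with `x A x = 0`, since only the `A_{ts}`-component of a middle factor contributes. In a semiprime
ring `x R x = 0` forces `x = 0`: if also `x² = 0`, the two-sided ideal generated by `x` squares to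
zero, and `x²` itself satisfies `x² R x² = 0` and `x² x² = 0`. -/

namespace TwoSidedIdeal

variable {R : Type*} [NonUnitalRing R] {x : R}

lemma mul_eq_zero_of_mem_span_singleton (hxx : x * x = 0) (hxrx : ∀ r, x * r * x = 0)
    {c : R} (hc : c ∈ span {x}) : x * c = 0 ∧ ∀ r, x * r * c = 0 := by
  induction hc using span_induction with
  | mem c hc =>
    rw [Set.mem_singleton_iff.mp hc]
    exact ⟨hxx, hxrx⟩
  | zero => simp
  | add c d _ _ hc hd =>
    exact ⟨by rw [mul_add, hc.1, hd.1, add_zero], fun r => by rw [mul_add, hc.2, hd.2, add_zero]⟩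
  | neg c _ hc => exact ⟨by rw [mul_neg, hc.1, neg_zero], fun r => by rw [mul_neg, hc.2, neg_zero]⟩
  | left_absorb a c _ hc =>
    exact ⟨by rw [← mul_assoc, hc.2], fun r => by rw [← mul_assoc, mul_assoc x, hc.2]⟩
  | right_absorb b c _ hc =>
    exact ⟨by rw [← mul_assoc, hc.1, zero_mul], fun r => by rw [← mul_assoc, hc.2, zero_mul]⟩

lemma mul_eq_zero_of_mem_span_singleton_of_mem_span_singleton (hxx : x * x = 0)
    (hxrx : ∀ r, x * r * x = 0) {a : R} (ha : a ∈ span {x}) : ∀ c ∈ span {x}, a * c = 0 := by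
  induction ha using span_induction with
  | mem a ha =>
    rw [Set.mem_singleton_iff.mp ha]
    exact fun c hc => (mul_eq_zero_of_mem_span_singleton hxx hxrx hc).1
  | zero => simp
  | add a b _ _ ha hb => exact fun c hc => by rw [add_mul, ha c hc, hb c hc, add_zero]
  | neg a _ ha => exact fun c hc => by rw [neg_mul, ha c hc, neg_zero]
  | left_absorb r a _ ha => exact fun c hc => by rw [mul_assoc, ha c hc, mul_zero]
  | right_absorb r a _ ha =>
    exact fun c hc => by rw [mul_assoc, ha (r * c) (mul_mem_left _ _ _ hc)]

end TwoSidedIdeal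

namespace IsSemiprimeRing

variable {R : Type*} [NonUnitalRing R] {x : R}

lemma eq_zero_of_mul_self_eq_zero (hR : IsSemiprimeRing R) (hxx : x * x = 0)
    (hxrx : ∀ r, x * r * x = 0) : x = 0 := by
  have hspan : TwoSidedIdeal.span {x} = ⊥ :=
    hR _ fun _ ha =>
      TwoSidedIdeal.mul_eq_zero_of_mem_span_singleton_of_mem_span_singleton hxx hxrx ha
  have hx : x ∈ TwoSidedIdeal.span {x} := TwoSidedIdeal.subset_span rfl
  rwa [hspan, TwoSidedIdeal.mem_bot] at hx

lemma eq_zero_of_forall_mul_mul_eq_zero (hR : IsSemiprimeRing R) (hxrx : ∀ r, x * r * x = 0) :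
    x = 0 := by
  have hxx : x * x = 0 := by
    refine hR.eq_zero_of_mul_self_eq_zero ?_ fun r => ?_
    · rw [← mul_assoc, hxrx x, zero_mul]
    · rw [mul_assoc x x r, mul_assoc x (x * r), ← mul_assoc (x * r) x x, hxrx, zero_mul,
        mul_zero]
  exact hR.eq_zero_of_mul_self_eq_zero hxx hxrx

end IsSemiprimeRing

namespace GammaSystem

variable {S : GammaSystem I}

open Classical in
lemma single_mul_single {i j k : I} (a : S.A i j) (b : S.A j k) :
    (DFinsupp.single (i, j) a : GMRing S) * DFinsupp.single (j, k) b =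
      DFinsupp.single (i, k) (S.mul a b) :=
  (S.gmul_single_single (i, j) (j, k) a b).trans (dif_pos rfl)

open Classical in
lemma single_mul_single_of_ne {i j k l : I} (a : S.A i j) (b : S.A k l) (h : j ≠ k) :
    (DFinsupp.single (i, j) a : GMRing S) * DFinsupp.single (k, l) b = 0 :=
  (S.gmul_single_single (i, j) (k, l) a b).trans (dif_neg h)

open Classical in
lemma single_mul_mul_single_eq_zero {s t : I} {b b' : S.A s t}
    (h : ∀ u : S.A t s, S.mul (S.mul b u) b' = 0) (z : GMRing S) :
    (DFinsupp.single (s, t) b : GMRing S) * z * DFinsupp.single (s, t) b' = 0 := by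
  induction z using DFinsupp.induction with
  | h0 => rw [mul_zero, zero_mul]
  | ha q c _ _ _ ih =>
    rw [_root_.mul_add, _root_.add_mul, ih, add_zero]
    obtain ⟨k, l⟩ := q
    by_cases htk : t = k
    · subst htk
      rw [single_mul_single]
      by_cases hls : l = s
      · subst hls
        rw [single_mul_single, h, DFinsupp.single_zero]
      · exact single_mul_single_of_ne _ _ hls
    · rw [single_mul_single_of_ne _ _ htk, zero_mul]

end GammaSystem

/-- **Proposition 3.1.** If the generalized matrix ring `A` is semiprime, then
for all `s, t ∈ I` the `A_{ts}`-ring `A_{st}` is semiprime: every ideal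
`B_{st}` of the `A_{ts}`-ring `A_{st}` with `B_{st}·A_{ts}·B_{st} = 0` is
zero. -/
theorem gammaRing_semiprime_of_gmRing_semiprime {I : Type u}
    (S : GammaSystem.{u, v} I) (hA : IsSemiprimeRing (GMRing S)) :
    ∀ (s t : I) (B : GammaIdeal S s t),
      (∀ b ∈ B.carrier, ∀ u : S.A t s, ∀ b' ∈ B.carrier,
        S.mul (S.mul b u) b' = 0) →
      B.carrier = ⊥ := by
  classical
  intro s t B hB
  rw [AddSubgroup.eq_bot_iff_forall]
  intro b hb
  have hsingle : (DFinsupp.single (s, t) b : GMRing S) = 0 :=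
    hA.eq_zero_of_forall_mul_mul_eq_zero
      (GammaSystem.single_mul_mul_single_eq_zero fun u => hB b hb u b hb)
  exact DFinsupp.single_eq_zero (β := fun p : I × I => S.A p.1 p.2).mp hsingle
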